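/- In the risk-neutral case γ = 0, the interval of discount factors (0,1) can be partitioned into finitely many subintervals on each of which a single stationary Markov policy is optimal: there exist k ∈ ℕ, points 0 = b_0 < b_1 < ⋯ < b_k = 1, and stationary Markov policies u_1, …, u_k : E → U such that for each j ∈ {1,…,k}, every β ∈ (b_{j-1}, b_j) and every x ∈ E, J_0(x,u_j;β) = sup_{π∈Π} J_0(x,π;β). -/

import Mathlib

open Filter Real

/-- A (history-dependent) policy: at time `n`, the action is a function of `(X_0, …, X_n)`. -/
abbrev Policy (E U : Type*) : Type _ := ∀ n : ℕ, (Fin (n + 1) → E) → U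

/-- The stationary Markov policy induced by `u : E → U`. -/
def stationaryPolicy {E U : Type*} (u : E → U) : Policy E U :=
  fun n h => u (h (Fin.last n))

/-- The Markov policy induced by a sequence `u : ℕ → E → U`. -/
def markovPolicy {E U : Type*} (u : ℕ → E → U) : Policy E U :=
  fun n h => u n (h (Fin.last n))

/-- The action taken at time `i` by policy `pol` along the path `ω = (x_0, …, x_n)`. -/
def act {E U : Type*} (pol : Policy E U) {n : ℕ} (ω : Fin (n + 1) → E) (i : Fin n) : U :=
  pol i.1 (fun j => ω (Fin.castLE (Nat.succ_le_succ i.2.le) j))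

/-- Probability of the path `ω = (x_0, …, x_n)` under policy `pol` started at `x`:
`∏_{i=0}^{n-1} P^{a_i}(x_i, x_{i+1})` if `x_0 = x`, and `0` otherwise. -/
def pathProb {E U : Type*} [DecidableEq E] (P : U → E → E → ℝ) (pol : Policy E U)
    (x : E) (n : ℕ) (ω : Fin (n + 1) → E) : ℝ :=
  (if ω 0 = x then 1 else 0) * ∏ i : Fin n, P (act pol ω i) (ω i.castSucc) (ω i.succ)

/-- Expectation `E_x^pol[f(X_0, …, X_n)]`. -/
noncomputable def expVal {E U : Type*} [Fintype E] [DecidableEq E]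
    (P : U → E → E → ℝ) (pol : Policy E U) (x : E) (n : ℕ)
    (f : (Fin (n + 1) → E) → ℝ) : ℝ :=
  ∑ ω : Fin (n + 1) → E, pathProb P pol x n ω * f ω

/-- The (possibly discounted) cumulative reward `Σ_{i=0}^{n-1} d i * c(X_i, a_i)` along `ω`. -/
def rewSum {E U : Type*} (c : E → U → ℝ) (pol : Policy E U) (d : ℕ → ℝ) (n : ℕ)
    (ω : Fin (n + 1) → E) : ℝ :=
  ∑ i : Fin n, d i.1 * c (ω i.castSucc) (act pol ω i)

/-- Long-run risk-sensitive averaged criterion `J_γ(x, pol)`. -/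
noncomputable def Javg {E U : Type*} [Fintype E] [DecidableEq E]
    (P : U → E → E → ℝ) (c : E → U → ℝ) (γ : ℝ) (x : E) (pol : Policy E U) : ℝ :=
  if γ = 0 then
    liminf (fun n : ℕ =>
      (1 / (n : ℝ)) * expVal P pol x n (rewSum c pol (fun _ => 1) n)) atTop
  else
    liminf (fun n : ℕ =>
      (1 / ((n : ℝ) * γ)) * Real.log (expVal P pol x n
        (fun ω => Real.exp (γ * rewSum c pol (fun _ => 1) n ω)))) atTop

/-- Discounted risk-sensitive criterion `J_γ(x, pol; β)`. -/
noncomputable def Jdisc {E U : Type*} [Fintype E] [DecidableEq E]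
    (P : U → E → E → ℝ) (c : E → U → ℝ) (γ : ℝ) (x : E) (pol : Policy E U) (β : ℝ) : ℝ :=
  if γ = 0 then
    limUnder atTop (fun n : ℕ => expVal P pol x n (rewSum c pol (fun i => β ^ i) n))
  else
    (1 / γ) * Real.log (limUnder atTop (fun n : ℕ =>
      expVal P pol x n (fun ω => Real.exp (γ * rewSum c pol (fun i => β ^ i) n ω))))

/-- Row-stochasticity of the family of transition matrices `(P^a)_{a ∈ U}`. -/
def IsStochastic {E U : Type*} [Fintype E] (P : U → E → E → ℝ) : Prop :=
  (∀ a x y, 0 ≤ P a x y) ∧ ∀ a x, ∑ y, P a x y = 1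

/-- Condition (C): strong uniform mixing, `min_{a} min_{x,y} P^a(x,y) > 0`. -/
def CondC {E U : Type*} (P : U → E → E → ℝ) : Prop :=
  ∀ a x y, 0 < P a x y

/-- `w` solves the risk-sensitive discounted Bellman equation for discount `β`. -/
def IsBellmanSol {E U : Type*} [Fintype E] [Fintype U]
    (P : U → E → E → ℝ) (c : E → U → ℝ) (β : ℝ) (w : E → ℝ → ℝ) : Prop :=
  ∀ x : E, ∀ γ : ℝ, γ ≠ 0 →
    w x γ = ⨆ a : U, (c x a + (1 / γ) * Real.log (∑ y, Real.exp (w y (β * γ)) * P a x y))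

/-!
For `0 ≤ β < 1` the Bellman optimality operator is a `β`-contraction of the sup norm. Its fixed
point dominates the value of every policy (the `n`-step values are dominated by its iterates) and
is the value of a greedy stationary policy. The value `v` of a stationary policy `u` solves
`(1 - β P_u) v = c_u`, so by Cramer's rule it is `N_u(β) / D_u(β)` with polynomials `N_u`, `D_u`
and `D_u > 0` on `(-1, 1)` (strict diagonal dominance). Hence the order between the values of two
stationary policies at a state is the sign of a polynomial in `β`; off the finitely many roots of
these polynomials it cannot change, and a stationary policy that is optimal at one point of a
root-free interval beats every stationary policy, hence every policy, on the whole interval.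
-/

open Function

lemma ciSup_le_ciSup_add {ι : Type*} [Finite ι] [Nonempty ι] {f g : ι → ℝ} {D : ℝ}
    (h : ∀ i, f i ≤ g i + D) : ⨆ i, f i ≤ (⨆ i, g i) + D :=
  ciSup_le fun i => (h i).trans (add_le_add_left (le_ciSup (Set.finite_range g).bddAbove i) D)

lemma abs_ciSup_sub_ciSup_le {ι : Type*} [Finite ι] [Nonempty ι] {f g : ι → ℝ} {D : ℝ}
    (h : ∀ i, |f i - g i| ≤ D) : |(⨆ i, f i) - ⨆ i, g i| ≤ D := by
  refine abs_sub_le_iff.2 ⟨?_, ?_⟩ <;> rw [sub_le_iff_le_add']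
  · exact ciSup_le_ciSup_add fun i => by linarith [(abs_sub_le_iff.1 (h i)).1]
  · exact ciSup_le_ciSup_add fun i => by linarith [(abs_sub_le_iff.1 (h i)).2]

lemma IsPreconnected.pos_of_forall_ne_zero {X : Type*} [TopologicalSpace X] {s : Set X}
    (hs : IsPreconnected s) {f : X → ℝ} (hf : ContinuousOn f s) (hne : ∀ x ∈ s, f x ≠ 0)
    {a b : X} (ha : a ∈ s) (hb : b ∈ s) (hfa : 0 < f a) : 0 < f b := by
  by_contra! hfb
  obtain ⟨x, hx, hfx⟩ := hs.intermediate_value hb ha hf ⟨hfb, hfa.le⟩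
  exact hne x hx hfx

theorem Finset.exists_strictMono_partition {α : Type*} [LinearOrder α] (S : Finset α) {a b : α}
    (hab : a ≤ b) :
    ∃ (k : ℕ) (p : Fin (k + 1) → α), p 0 = a ∧ p (Fin.last k) = b ∧ StrictMono p ∧
      ∀ j : Fin k, ∀ t ∈ Set.Ioo (p j.castSucc) (p j.succ), t ∉ S := by
  classical
  set T := insert a (insert b (S.filter (· ∈ Set.Icc a b)))
  have hT : ∀ t ∈ T, a ≤ t ∧ t ≤ b := by
    simp only [T, Finset.mem_insert, Finset.mem_filter]
    rintro t (rfl | rfl | ⟨-, ht⟩)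
    exacts [⟨le_rfl, hab⟩, ⟨hab, le_rfl⟩, ht]
  obtain ⟨k, hk⟩ : ∃ k, T.card = k + 1 :=
    Nat.exists_eq_succ_of_ne_zero (Finset.card_ne_zero_of_mem (Finset.mem_insert_self a _))
  set p := T.orderEmbOfFin hk
  have hrange : ∀ t ∈ T, ∃ m, p m = t := fun t ht => by
    rwa [← Set.mem_range, Finset.range_orderEmbOfFin]
  have hp0 : p 0 = a := by
    obtain ⟨m, hm⟩ := hrange a (Finset.mem_insert_self a _)
    exact le_antisymm (hm ▸ p.monotone (Fin.zero_le m)) (hT _ (T.orderEmbOfFin_mem hk 0)).1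
  have hpk : p (Fin.last k) = b := by
    obtain ⟨m, hm⟩ := hrange b (Finset.mem_insert_of_mem (Finset.mem_insert_self b _))
    exact le_antisymm (hT _ (T.orderEmbOfFin_mem hk _)).2 (hm ▸ p.monotone (Fin.le_last m))
  refine ⟨k, p, hp0, hpk, p.strictMono, fun j t ht htS => ?_⟩
  have htab : t ∈ Set.Icc a b :=
    ⟨hp0 ▸ (p.monotone (Fin.zero_le _)).trans ht.1.le,
      hpk ▸ ht.2.le.trans (p.monotone (Fin.le_last _))⟩
  obtain ⟨m, rfl⟩ := hrange t (Finset.mem_insert_of_mem (Finset.mem_insert_of_mem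
    (Finset.mem_filter.2 ⟨htS, htab⟩)))
  have h1 := p.lt_iff_lt.1 ht.1
  have h2 := p.lt_iff_lt.1 ht.2
  rw [Fin.lt_def] at h1 h2
  simp only [Fin.val_castSucc, Fin.val_succ] at h1 h2
  omega

namespace Policy

variable {E U : Type*}

def shift (pol : Policy E U) (x : E) : Policy E U := fun m h => pol (m + 1) (Fin.cons x h)

@[simp]
lemma shift_stationaryPolicy (u : E → U) (x : E) :
    shift (stationaryPolicy u) x = stationaryPolicy u := by
  funext m h
  simp only [shift, stationaryPolicy]
  rw [← Fin.succ_last, Fin.cons_succ]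

end Policy

section Paths

variable {E U : Type*}

lemma act_cons_zero (pol : Policy E U) {n : ℕ} (x : E) (ω : Fin (n + 1) → E) :
    act pol (Fin.cons x ω) 0 = pol 0 (fun _ => x) := by
  show pol 0 _ = pol 0 _
  congr 1
  funext j
  exact Fin.cases rfl (fun j' => j'.elim0) j

lemma act_cons_succ (pol : Policy E U) {n : ℕ} (x : E) (ω : Fin (n + 1) → E) (i : Fin n) :
    act pol (Fin.cons x ω) i.succ = act (pol.shift x) ω i := by
  show pol (i.1 + 1) _ = pol (i.1 + 1) _
  congr 1
  funext j
  exact Fin.cases rfl (fun _ => rfl) j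

lemma pathProb_cons [DecidableEq E] (P : U → E → E → ℝ) (pol : Policy E U) (x x₀ : E) (n : ℕ)
    (ω : Fin (n + 1) → E) :
    pathProb P pol x (n + 1) (Fin.cons x₀ ω) =
      (if x₀ = x then 1 else 0) * P (pol 0 (fun _ => x₀)) x₀ (ω 0) *
        pathProb P (pol.shift x₀) (ω 0) n ω := by
  simp only [pathProb, Fin.prod_univ_succ, Fin.cons_zero, act_cons_zero, act_cons_succ,
    Fin.castSucc_zero, Fin.cons_succ, ← Fin.succ_castSucc, if_pos, one_mul, mul_assoc]

lemma rewSum_cons (c : E → U → ℝ) (pol : Policy E U) (β : ℝ) (x₀ : E) (n : ℕ)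
    (ω : Fin (n + 1) → E) :
    rewSum c pol (β ^ ·) (n + 1) (Fin.cons x₀ ω) =
      c x₀ (pol 0 (fun _ => x₀)) + β * rewSum c (pol.shift x₀) (β ^ ·) n ω := by
  simp only [rewSum, Fin.sum_univ_succ, Fin.castSucc_zero, Fin.cons_zero, act_cons_zero,
    act_cons_succ, ← Fin.succ_castSucc, Fin.cons_succ, Finset.mul_sum, Fin.val_zero,
    Fin.val_succ, pow_zero, one_mul, pow_succ]
  congr 1
  exact Finset.sum_congr rfl fun _ _ => by ring

variable [Fintype E] [DecidableEq E]

lemma expVal_succ (P : U → E → E → ℝ) (pol : Policy E U) (x : E) (n : ℕ)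
    (f : (Fin (n + 2) → E) → ℝ) :
    expVal P pol x (n + 1) f =
      ∑ y, P (pol 0 (fun _ => x)) x y *
        expVal P (pol.shift x) y n (fun ω => f (Fin.cons x ω)) := by
  have hstart : ∀ (y : E) (ω : Fin (n + 1) → E), ω 0 ≠ y → pathProb P (pol.shift x) y n ω = 0 :=
    fun y ω h => by simp [pathProb, h]
  rw [expVal, ← (Fin.consEquiv fun _ => E).sum_comp, Fintype.sum_prod_type,
    Finset.sum_eq_single x (fun x₀ _ h => by simp [Fin.consEquiv, pathProb_cons, h])
      (by simp)]
  simp only [expVal, Finset.mul_sum, Fin.consEquiv, Equiv.coe_fn_mk, pathProb_cons, if_true,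
    one_mul]
  rw [Finset.sum_comm]
  refine Finset.sum_congr rfl fun ω _ => ?_
  rw [Finset.sum_eq_single (ω 0) (fun y _ h => by simp [hstart y ω (Ne.symm h)]) (by simp)]
  ring

variable {P : U → E → E → ℝ}

lemma expVal_one (hP : IsStochastic P) (pol : Policy E U) (x : E) (n : ℕ) :
    expVal P pol x n (fun _ => 1) = 1 := by
  induction n generalizing pol x with
  | zero =>
    rw [expVal, ← (Equiv.funUnique (Fin 1) E).symm.sum_comp]
    simp [pathProb]
  | succ n ih => simp only [expVal_succ, ih, mul_one, hP.2]

lemma expVal_const_add_mul (hP : IsStochastic P) (pol : Policy E U) (x : E) (n : ℕ)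
    (a b : ℝ) (f : (Fin (n + 1) → E) → ℝ) :
    expVal P pol x n (fun ω => a + b * f ω) = a + b * expVal P pol x n f := by
  have h := expVal_one hP pol x n
  simp only [expVal, mul_one] at h ⊢
  simp only [mul_add, Finset.sum_add_distrib, ← Finset.sum_mul, h, one_mul, Finset.mul_sum]
  congr 1
  exact Finset.sum_congr rfl fun _ _ => by ring

end Paths

section Bellman

variable {E U : Type*} [Fintype E] {P : U → E → E → ℝ} {c : E → U → ℝ} {β : ℝ}

lemma abs_sum_mul_le (hP : IsStochastic P) (a : U) (x : E) {g : E → ℝ} {B : ℝ}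
    (hg : ∀ y, |g y| ≤ B) : |∑ y, P a x y * g y| ≤ B :=
  calc |∑ y, P a x y * g y| ≤ ∑ y, P a x y * |g y| := by
        refine (Finset.abs_sum_le_sum_abs _ _).trans_eq (Finset.sum_congr rfl fun y _ => ?_)
        rw [abs_mul, abs_of_nonneg (hP.1 a x y)]
    _ ≤ ∑ y, P a x y * B := by gcongr with y; exacts [hP.1 a x y, hg y]
    _ = B := by rw [← Finset.sum_mul, hP.2, one_mul]

noncomputable def qValue (P : U → E → E → ℝ) (c : E → U → ℝ) (β : ℝ) (v : E → ℝ) (x : E)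
    (a : U) : ℝ :=
  c x a + β * ∑ y, P a x y * v y

lemma qValue_mono (hP : IsStochastic P) (hβ : 0 ≤ β) {v w : E → ℝ} (hvw : v ≤ w) (x : E)
    (a : U) : qValue P c β v x a ≤ qValue P c β w x a := by
  unfold qValue
  gcongr with y
  exacts [hP.1 a x y, hvw y]

lemma abs_qValue_sub_le (hP : IsStochastic P) (hβ : 0 ≤ β) (v w : E → ℝ) (x : E) (a : U) :
    |qValue P c β v x a - qValue P c β w x a| ≤ β * dist v w := by
  have hsum : |∑ y, P a x y * (v y - w y)| ≤ dist v w :=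
    abs_sum_mul_le hP a x fun y => (Real.dist_eq _ _).symm.trans_le (dist_le_pi_dist v w y)
  simp only [mul_sub, Finset.sum_sub_distrib] at hsum
  rw [qValue, qValue, add_sub_add_left_eq_sub, ← mul_sub, abs_mul, abs_of_nonneg hβ]
  exact mul_le_mul_of_nonneg_left hsum hβ

noncomputable def bellmanOp (P : U → E → E → ℝ) (c : E → U → ℝ) (β : ℝ) (u : E → U) (v : E → ℝ) :
    E → ℝ :=
  fun x => qValue P c β v x (u x)

noncomputable def optBellmanOp (P : U → E → E → ℝ) (c : E → U → ℝ) (β : ℝ) (v : E → ℝ) :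
    E → ℝ :=
  fun x => ⨆ a, qValue P c β v x a

lemma contractingWith_of_abs_sub_le {T : (E → ℝ) → E → ℝ} (hβ0 : 0 ≤ β) (hβ1 : β < 1)
    (hT : ∀ v w x, |T v x - T w x| ≤ β * dist v w) : ContractingWith ⟨β, hβ0⟩ T :=
  ⟨hβ1, LipschitzWith.of_dist_le_mul fun v w =>
    (dist_pi_le_iff (by positivity)).2 fun x => (Real.dist_eq _ _).trans_le (hT v w x)⟩

lemma contractingWith_bellmanOp (hP : IsStochastic P) (u : E → U) (hβ0 : 0 ≤ β)
    (hβ1 : β < 1) : ContractingWith ⟨β, hβ0⟩ (bellmanOp P c β u) :=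
  contractingWith_of_abs_sub_le hβ0 hβ1 fun v w x => abs_qValue_sub_le hP hβ0 v w x (u x)

lemma contractingWith_optBellmanOp [Finite U] [Nonempty U] (hP : IsStochastic P)
    (hβ0 : 0 ≤ β) (hβ1 : β < 1) : ContractingWith ⟨β, hβ0⟩ (optBellmanOp P c β) :=
  contractingWith_of_abs_sub_le hβ0 hβ1 fun v w x =>
    abs_ciSup_sub_ciSup_le fun a => abs_qValue_sub_le hP hβ0 v w x a

lemma exists_isFixedPt_bellmanOp_of_isFixedPt [Finite U] [Nonempty U] {v : E → ℝ}
    (hv : IsFixedPt (optBellmanOp P c β) v) : ∃ u, IsFixedPt (bellmanOp P c β u) v := by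
  choose u hu using fun x => Finite.exists_max (qValue P c β v x)
  refine ⟨u, funext fun x => ?_⟩
  conv_rhs => rw [← hv]
  exact le_antisymm (le_ciSup (Set.finite_range (qValue P c β v x)).bddAbove _)
    (ciSup_le (hu x))

end Bellman

section FiniteHorizon

variable {E U : Type*} [Fintype E] [DecidableEq E] {P : U → E → E → ℝ} {c : E → U → ℝ}

noncomputable def finiteHorizonValue (P : U → E → E → ℝ) (c : E → U → ℝ) (β : ℝ)
    (pol : Policy E U) (n : ℕ) (x : E) : ℝ :=
  expVal P pol x n (rewSum c pol (β ^ ·) n)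

@[simp]
lemma finiteHorizonValue_zero (β : ℝ) (pol : Policy E U) :
    finiteHorizonValue P c β pol 0 = 0 := by
  funext x
  simp [finiteHorizonValue, expVal, rewSum]

lemma finiteHorizonValue_succ (hP : IsStochastic P) (β : ℝ) (pol : Policy E U) (n : ℕ)
    (x : E) :
    finiteHorizonValue P c β pol (n + 1) x =
      qValue P c β (finiteHorizonValue P c β (pol.shift x) n) x (pol 0 fun _ => x) := by
  simp only [finiteHorizonValue, qValue, expVal_succ, rewSum_cons, expVal_const_add_mul hP,
    mul_add, Finset.sum_add_distrib, ← Finset.sum_mul, hP.2, one_mul, Finset.mul_sum]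
  congr 1
  exact Finset.sum_congr rfl fun _ _ => by ring

end FiniteHorizon

section DiscountedValue

variable {E U : Type*} [Fintype E] [DecidableEq E] {P : U → E → E → ℝ} {c : E → U → ℝ}
  {β : ℝ}

lemma Jdisc_zero (x : E) (pol : Policy E U) (β : ℝ) :
    Jdisc P c 0 x pol β = limUnder atTop fun n => finiteHorizonValue P c β pol n x :=
  if_pos rfl

lemma finiteHorizonValue_stationaryPolicy (hP : IsStochastic P) (u : E → U) (n : ℕ) :
    finiteHorizonValue P c β (stationaryPolicy u) n = (bellmanOp P c β u)^[n] 0 := by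
  induction n with
  | zero => simp
  | succ n ih =>
    funext x
    rw [iterate_succ_apply', ← ih, finiteHorizonValue_succ hP,
      Policy.shift_stationaryPolicy]
    rfl

lemma Jdisc_stationaryPolicy_eq (hP : IsStochastic P) (hβ0 : 0 ≤ β) (hβ1 : β < 1)
    {u : E → U} {v : E → ℝ} (hv : IsFixedPt (bellmanOp P c β u) v) (x : E) :
    Jdisc P c 0 x (stationaryPolicy u) β = v x := by
  have hT := contractingWith_bellmanOp (c := c) hP u hβ0 hβ1
  rw [Jdisc_zero, hT.fixedPoint_unique hv]
  refine (tendsto_pi_nhds.1 ?_ x).limUnder_eq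
  simpa only [← finiteHorizonValue_stationaryPolicy hP] using hT.tendsto_iterate_fixedPoint 0

variable [Fintype U]

lemma abs_finiteHorizonValue_succ_sub_le (hP : IsStochastic P) (hβ0 : 0 ≤ β)
    (pol : Policy E U) (n : ℕ) (x : E) :
    |finiteHorizonValue P c β pol (n + 1) x - finiteHorizonValue P c β pol n x| ≤ β ^ n * ‖c‖ := by
  induction n generalizing pol x with
  | zero =>
    simpa [finiteHorizonValue_succ hP, qValue] using
      (norm_le_pi_norm (c x) _).trans (norm_le_pi_norm c x)
  | succ n ih =>
    rw [finiteHorizonValue_succ hP _ _ (n + 1), finiteHorizonValue_succ hP _ _ n]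
    calc _ ≤ β * dist (finiteHorizonValue P c β (pol.shift x) (n + 1))
          (finiteHorizonValue P c β (pol.shift x) n) := abs_qValue_sub_le hP hβ0 _ _ x _
      _ ≤ β * (β ^ n * ‖c‖) := by
        gcongr
        exact (dist_pi_le_iff (by positivity)).2 fun y => (Real.dist_eq _ _).trans_le (ih _ y)
      _ = β ^ (n + 1) * ‖c‖ := by ring

lemma cauchySeq_finiteHorizonValue (hP : IsStochastic P) (hβ0 : 0 ≤ β) (hβ1 : β < 1)
    (pol : Policy E U) (x : E) : CauchySeq fun n => finiteHorizonValue P c β pol n x :=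
  cauchySeq_of_le_geometric β ‖c‖ hβ1 fun n => by
    rw [dist_comm, Real.dist_eq, mul_comm]
    exact abs_finiteHorizonValue_succ_sub_le hP hβ0 pol n x

lemma finiteHorizonValue_le_iterate (hP : IsStochastic P) (hβ0 : 0 ≤ β) (pol : Policy E U)
    (n : ℕ) : finiteHorizonValue P c β pol n ≤ (optBellmanOp P c β)^[n] 0 := by
  induction n generalizing pol with
  | zero => simp
  | succ n ih =>
    intro x
    rw [finiteHorizonValue_succ hP, iterate_succ_apply']
    exact (qValue_mono hP hβ0 (ih _) x _).trans (le_ciSup (Set.finite_range _).bddAbove _)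

variable [Nonempty U]

lemma Jdisc_le_of_isFixedPt (hP : IsStochastic P) (hβ0 : 0 ≤ β) (hβ1 : β < 1) {v : E → ℝ}
    (hv : IsFixedPt (optBellmanOp P c β) v) (pol : Policy E U) (x : E) :
    Jdisc P c 0 x pol β ≤ v x := by
  have hT := contractingWith_optBellmanOp (c := c) hP hβ0 hβ1
  obtain ⟨L, hL⟩ := cauchySeq_tendsto_of_complete (cauchySeq_finiteHorizonValue hP hβ0 hβ1 pol x)
  rw [Jdisc_zero, hL.limUnder_eq, hT.fixedPoint_unique hv]
  exact le_of_tendsto_of_tendsto' hL (tendsto_pi_nhds.1 (hT.tendsto_iterate_fixedPoint 0) x)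
    fun n => finiteHorizonValue_le_iterate hP hβ0 pol n x

lemma exists_optimal_stationaryPolicy (hP : IsStochastic P) (hβ0 : 0 ≤ β) (hβ1 : β < 1) :
    ∃ u : E → U, ∀ pol x, Jdisc P c 0 x pol β ≤ Jdisc P c 0 x (stationaryPolicy u) β := by
  have hT := contractingWith_optBellmanOp (c := c) hP hβ0 hβ1
  obtain ⟨u, hu⟩ := exists_isFixedPt_bellmanOp_of_isFixedPt hT.fixedPoint_isFixedPt
  refine ⟨u, fun pol x => ?_⟩
  rw [Jdisc_stationaryPolicy_eq hP hβ0 hβ1 hu]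
  exact Jdisc_le_of_isFixedPt hP hβ0 hβ1 hT.fixedPoint_isFixedPt pol x

lemma Jdisc_stationaryPolicy_eq_iSup (hP : IsStochastic P) (hβ0 : 0 ≤ β) (hβ1 : β < 1)
    {u : E → U}
    (hu : ∀ u' x, Jdisc P c 0 x (stationaryPolicy u') β ≤ Jdisc P c 0 x (stationaryPolicy u) β)
    (x : E) : Jdisc P c 0 x (stationaryPolicy u) β = ⨆ pol, Jdisc P c 0 x pol β := by
  obtain ⟨u₀, hu₀⟩ := exists_optimal_stationaryPolicy (c := c) hP hβ0 hβ1
  have hle : ∀ pol, Jdisc P c 0 x pol β ≤ Jdisc P c 0 x (stationaryPolicy u) β :=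
    fun pol => (hu₀ pol x).trans (hu u₀ x)
  exact le_antisymm (le_ciSup ⟨_, Set.forall_mem_range.2 hle⟩ _) (ciSup_le hle)

end DiscountedValue

section Rationality

open Polynomial Matrix

variable {E U : Type*} [Fintype E] {P : U → E → E → ℝ} {c : E → U → ℝ}
  {β : ℝ}

def transMat (P : U → E → E → ℝ) (u : E → U) : Matrix E E ℝ :=
  Matrix.of fun x y => P (u x) x y

lemma transMat_diag_le_one (hP : IsStochastic P) (u : E → U) (x : E) : transMat P u x x ≤ 1 :=
  (hP.2 (u x) x).symm ▸ Finset.single_le_sum (fun y _ => hP.1 (u x) x y) (Finset.mem_univ x)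

variable [DecidableEq E]

lemma det_one_sub_smul_transMat_ne_zero (hP : IsStochastic P) (u : E → U) (hβ : |β| < 1) :
    (1 - β • transMat P u).det ≠ 0 := by
  refine det_ne_zero_of_sum_row_lt_diag fun x => ?_
  have hoff : ∑ y ∈ Finset.univ.erase x, ‖(1 - β • transMat P u) x y‖ =
      |β| * (1 - transMat P u x x) := by
    have hrow : 1 - transMat P u x x = ∑ y ∈ Finset.univ.erase x, P (u x) x y := by
      rw [Finset.sum_erase_eq_sub (Finset.mem_univ x), hP.2]
      rfl
    rw [hrow, Finset.mul_sum]
    refine Finset.sum_congr rfl fun y hy => ?_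
    simp [Matrix.one_apply_ne' (Finset.ne_of_mem_erase hy), transMat,
      abs_of_nonneg (hP.1 (u x) x y)]
  have hdiag : 1 - |β| * transMat P u x x ≤ ‖(1 - β • transMat P u) x x‖ := by
    simpa [abs_mul, abs_of_nonneg (hP.1 (u x) x x), transMat] using
      abs_sub_abs_le_abs_sub 1 (β * transMat P u x x)
  nlinarith [transMat_diag_le_one hP u x, hP.1 (u x) x x]


noncomputable def transPolyMat (P : U → E → E → ℝ) (u : E → U) : Matrix E E ℝ[X] :=
  1 - (X : ℝ[X]) • (transMat P u).map C

lemma mapMatrix_evalRingHom_transPolyMat (u : E → U) (β : ℝ) :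
    (evalRingHom β).mapMatrix (transPolyMat P u) = 1 - β • transMat P u := by
  ext x y
  by_cases hxy : x = y <;> simp [transPolyMat, hxy] <;> ring

noncomputable def detPoly (P : U → E → E → ℝ) (u : E → U) : ℝ[X] :=
  (transPolyMat P u).det

noncomputable def numPoly (P : U → E → E → ℝ) (c : E → U → ℝ) (u : E → U) (x : E) : ℝ[X] :=
  ((transPolyMat P u).adjugate *ᵥ fun y => C (c y (u y))) x

lemma eval_detPoly (u : E → U) (β : ℝ) :
    (detPoly P u).eval β = (1 - β • transMat P u).det := by
  rw [detPoly, ← coe_evalRingHom, RingHom.map_det, mapMatrix_evalRingHom_transPolyMat]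

lemma eval_numPoly (u : E → U) (β : ℝ) (x : E) :
    (numPoly P c u x).eval β = ((1 - β • transMat P u).adjugate *ᵥ fun y => c y (u y)) x := by
  rw [numPoly, ← coe_evalRingHom, RingHom.map_mulVec, ← RingHom.mapMatrix_apply,
    RingHom.map_adjugate, mapMatrix_evalRingHom_transPolyMat]
  simp [Function.comp_def]

lemma eval_detPoly_pos (hP : IsStochastic P) (u : E → U) (hβ : |β| < 1) :
    0 < (detPoly P u).eval β := by
  refine isPreconnected_Ioo.pos_of_forall_ne_zero (detPoly P u).continuous.continuousOn
    (fun t ht => ?_) (a := 0) (by norm_num) (abs_lt.1 hβ) (by simp [eval_detPoly])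
  rw [eval_detPoly]
  exact det_one_sub_smul_transMat_ne_zero hP u (abs_lt.2 ht)

lemma one_sub_smul_transMat_mulVec_of_isFixedPt {u : E → U} {v : E → ℝ}
    (hv : IsFixedPt (bellmanOp P c β u) v) :
    (1 - β • transMat P u) *ᵥ v = fun y => c y (u y) := by
  funext x
  have hx := congrFun hv x
  simp only [bellmanOp, qValue] at hx
  rw [sub_mulVec, one_mulVec, smul_mulVec]
  simp only [Pi.sub_apply, Pi.smul_apply, smul_eq_mul, mulVec, dotProduct, transMat, of_apply]
  linarith

lemma eval_detPoly_mul_Jdisc (hP : IsStochastic P) (hβ0 : 0 ≤ β) (hβ1 : β < 1) (u : E → U)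
    (x : E) :
    (detPoly P u).eval β * Jdisc P c 0 x (stationaryPolicy u) β = (numPoly P c u x).eval β := by
  have hT := contractingWith_bellmanOp (c := c) hP u hβ0 hβ1
  rw [Jdisc_stationaryPolicy_eq hP hβ0 hβ1 hT.fixedPoint_isFixedPt, eval_detPoly, eval_numPoly,
    ← one_sub_smul_transMat_mulVec_of_isFixedPt hT.fixedPoint_isFixedPt, Matrix.mulVec_mulVec,
    Matrix.adjugate_mul, Matrix.smul_mulVec, Matrix.one_mulVec]
  rfl

end Rationality

section SwitchingPoints

open Polynomial

variable {E U : Type*} [Fintype E] [DecidableEq E] {P : U → E → E → ℝ} {c : E → U → ℝ}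

noncomputable def comparisonPoly (P : U → E → E → ℝ) (c : E → U → ℝ) (u u' : E → U) (x : E) :
    ℝ[X] :=
  numPoly P c u x * detPoly P u' - numPoly P c u' x * detPoly P u

lemma eval_comparisonPoly (hP : IsStochastic P) {β : ℝ} (hβ0 : 0 ≤ β) (hβ1 : β < 1)
    (u u' : E → U) (x : E) :
    (comparisonPoly P c u u' x).eval β = (detPoly P u).eval β * (detPoly P u').eval β *
      (Jdisc P c 0 x (stationaryPolicy u) β - Jdisc P c 0 x (stationaryPolicy u') β) := by
  simp only [comparisonPoly, eval_sub, eval_mul, ← eval_detPoly_mul_Jdisc hP hβ0 hβ1]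
  ring

variable [Fintype U]

-- `roots 0 = 0`: a pair of policies whose values agree for every `β` contributes no points.
noncomputable def switchingPoints (P : U → E → E → ℝ) (c : E → U → ℝ) : Finset ℝ :=
  Finset.univ.biUnion fun t : (E → U) × (E → U) × E =>
    (comparisonPoly P c t.1 t.2.1 t.2.2).roots.toFinset

lemma Jdisc_stationaryPolicy_le_of_isPreconnected (hP : IsStochastic P) {I : Set ℝ}
    (hI : IsPreconnected I) (hI01 : I ⊆ Set.Ico 0 1) (hIS : ∀ t ∈ I, t ∉ switchingPoints P c)
    {β₀ β : ℝ} (hβ₀ : β₀ ∈ I) (hβ : β ∈ I) {u u' : E → U} {x : E}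
    (h : Jdisc P c 0 x (stationaryPolicy u') β₀ ≤ Jdisc P c 0 x (stationaryPolicy u) β₀) :
    Jdisc P c 0 x (stationaryPolicy u') β ≤ Jdisc P c 0 x (stationaryPolicy u) β := by
  set q := comparisonPoly P c u u' x
  have hsign : ∀ t ∈ I, 0 ≤ q.eval t ↔
      Jdisc P c 0 x (stationaryPolicy u') t ≤ Jdisc P c 0 x (stationaryPolicy u) t := by
    intro t ht
    obtain ⟨ht0, ht1⟩ := hI01 ht
    have hd : |t| < 1 := by rwa [abs_of_nonneg ht0]
    rw [eval_comparisonPoly hP ht0 ht1, mul_nonneg_iff_of_pos_left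
      (mul_pos (eval_detPoly_pos hP u hd) (eval_detPoly_pos hP u' hd)), sub_nonneg]
  rw [← hsign β hβ]
  by_cases hq : q = 0
  · simp [hq]
  have hroot : ∀ t ∈ I, q.eval t ≠ 0 := fun t ht h0 =>
    hIS t ht (Finset.mem_biUnion.2
      ⟨(u, u', x), Finset.mem_univ _, Multiset.mem_toFinset.2 ((mem_roots hq).2 h0)⟩)
  exact (hI.pos_of_forall_ne_zero q.continuous.continuousOn hroot hβ₀ hβ
    (((hsign β₀ hβ₀).2 h).lt_of_ne (hroot β₀ hβ₀).symm)).le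

end SwitchingPoints

theorem finite_partition_of_discount_factors_general
    {E U : Type*} [Fintype E] [DecidableEq E] [Fintype U] [Nonempty U]
    (P : U → E → E → ℝ) (c : E → U → ℝ)
    (hP : IsStochastic P) :
    ∃ (k : ℕ) (b : Fin (k + 1) → ℝ) (u : Fin k → E → U),
      b 0 = 0 ∧ b (Fin.last k) = 1 ∧ StrictMono b ∧
      ∀ j : Fin k, ∀ β ∈ Set.Ioo (b j.castSucc) (b j.succ), ∀ x : E,
        Jdisc P c 0 x (stationaryPolicy (u j)) β =
          ⨆ pol : Policy E U, Jdisc P c 0 x pol β := by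
  obtain ⟨k, b, hb0, hbk, hb, hgap⟩ := (switchingPoints P c).exists_strictMono_partition zero_le_one
  have hsub : ∀ j : Fin k, Set.Ioo (b j.castSucc) (b j.succ) ⊆ Set.Ico 0 1 := fun j t ht =>
    ⟨hb0 ▸ (hb.monotone (Fin.zero_le _)).trans ht.1.le,
      hbk ▸ ht.2.trans_le (hb.monotone (Fin.le_last _))⟩
  choose β₀ hβ₀ using fun j : Fin k => exists_between (hb (Fin.castSucc_lt_succ (i := j)))
  choose u hu using fun j =>
    exists_optimal_stationaryPolicy (c := c) hP (hsub j (hβ₀ j)).1 (hsub j (hβ₀ j)).2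
  refine ⟨k, b, u, hb0, hbk, hb, fun j β hβ x => ?_⟩
  exact Jdisc_stationaryPolicy_eq_iSup hP (hsub j hβ).1 (hsub j hβ).2
    (fun u' y => Jdisc_stationaryPolicy_le_of_isPreconnected hP isPreconnected_Ioo (hsub j)
      (hgap j) (hβ₀ j) hβ (hu j _ y)) x

/-- in the risk-neutral case `γ = 0`, the interval `(0,1)` of discount factors
can be partitioned into finitely many subintervals, on each of which a single stationary
Markov policy is discount optimal. -/
theorem finite_partition_of_discount_factors
    {E U : Type*} [Fintype E] [DecidableEq E] [Fintype U] [Nonempty E] [Nonempty U]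
    (P : U → E → E → ℝ) (c : E → U → ℝ)
    (hP : IsStochastic P) :
    ∃ (k : ℕ) (b : Fin (k + 1) → ℝ) (u : Fin k → E → U),
      b 0 = 0 ∧ b (Fin.last k) = 1 ∧ StrictMono b ∧
      ∀ j : Fin k, ∀ β ∈ Set.Ioo (b j.castSucc) (b j.succ), ∀ x : E,
        Jdisc P c 0 x (stationaryPolicy (u j)) β =
          ⨆ pol : Policy E U, Jdisc P c 0 x pol β :=
  finite_partition_of_discount_factors_general P c hP
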